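/- Let k ∈ ℕ, s ∈ {0, 1, …, ⌊k/2⌋}, and let h ∈ ℝ[X₁,…,Xₙ] be homogeneous of degree k − 2s with Δ(h) = 0. Then F·Δ(F^s · h) = b_{k,s} · F^s · h; that is, F^s h is an eigenvector of the operator R∘Δ on degree-k homogeneous polynomials with eigenvalue b_{k,s} (and for s ≥ 1 one has Δ(F^s h) = b_{k,s} F^{s−1} h). -/

import Mathlib

/-!
Writing `E = ∑ Xᵢ ∂ᵢ` for the Euler operator, the Leibniz rule and `εᵢ² = 1` give the commutation
relation `Δ(F P) = F ΔP + 4 E P + 2n P`. On a homogeneous `P` of degree `d` Euler's identity turns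
this into `Δ(F P) = F ΔP + (4d + 2n) P`, and an induction on `s` starting from `Δh = 0` yields
`Δ(Fˢ h) = 2s(n + 2 deg h + 2(s - 1)) Fˢ⁻¹ h`, which is `b_{k,s} Fˢ⁻¹ h` since `deg h = k - 2s`.
-/

open MvPolynomial

/-- Signature: `ε_i = 1` for `i < p` (1-based: `i ≤ p`), `ε_i = -1` otherwise. -/
noncomputable def sgn (p : ℕ) {n : ℕ} (i : Fin n) : ℝ := if (i : ℕ) < p then 1 else -1

/-- `F = ∑ ε_i X_i²`. -/
noncomputable def Fquad (p q : ℕ) : MvPolynomial (Fin (p + q)) ℝ :=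
  ∑ i, C (sgn p i) * X i ^ 2

/-- The Laplacian of signature `(p,q)`: `Δ = ∑ ε_i ∂²/∂X_i²`. -/
noncomputable def lap (p q : ℕ) (P : MvPolynomial (Fin (p + q)) ℝ) :
    MvPolynomial (Fin (p + q)) ℝ :=
  ∑ i, C (sgn p i) * pderiv i (pderiv i P)

/-- `b_{k,s} = 2s(n + 2(k - s - 1))` with `n = p + q`. -/
noncomputable def bCoef (n k s : ℕ) : ℝ :=
  2 * (s : ℝ) * ((n : ℝ) + 2 * ((k : ℝ) - (s : ℝ) - 1))

namespace MvPolynomial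

variable {R σ : Type*} [CommRing R] [Fintype σ] (ε : σ → R)

-- `Fquad p q` and `lap p q` are definitionally `diagQuad (sgn p)` and `diagLaplacian (sgn p)`.
noncomputable def diagQuad : MvPolynomial σ R :=
  ∑ i, C (ε i) * X i ^ 2

noncomputable def diagLaplacian (P : MvPolynomial σ R) : MvPolynomial σ R :=
  ∑ i, C (ε i) * pderiv i (pderiv i P)

theorem isHomogeneous_diagQuad : (diagQuad ε).IsHomogeneous 2 :=
  IsHomogeneous.sum _ _ _ fun i _ => by
    simpa using ((isHomogeneous_X R i).pow 2).C_mul (ε i)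

theorem pderiv_diagQuad (i : σ) : pderiv i (diagQuad ε) = C (2 * ε i) * X i := by
  classical
  rw [diagQuad, map_sum, Finset.sum_eq_single i]
  · simp only [pderiv_C_mul, pderiv_pow, pderiv_X_self, C_mul, map_ofNat]
    ring
  · intro j _ hji
    simp [pderiv_X_of_ne hji]
  · simp

variable {ε}

theorem diagLaplacian_diagQuad_mul (hε : ∀ i, ε i * ε i = 1) (P : MvPolynomial σ R) :
    diagLaplacian ε (diagQuad ε * P) =
      diagQuad ε * diagLaplacian ε P + 4 * ∑ i, X i * pderiv i P
        + (2 * Fintype.card σ) • P := by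
  have summand (i : σ) : C (ε i) * pderiv i (pderiv i (diagQuad ε * P)) =
      diagQuad ε * (C (ε i) * pderiv i (pderiv i P)) + 4 * (X i * pderiv i P) + 2 * P := by
    have hεC : C (ε i) * C (ε i) = (1 : MvPolynomial σ R) := by rw [← C_mul, hε, C_1]
    simp only [pderiv_mul, map_add, pderiv_diagQuad, pderiv_C, pderiv_X_self]
    simp only [C_mul, map_ofNat]
    linear_combination (2 * P + 4 * (X i * pderiv i P)) * hεC
  simp only [diagLaplacian, summand, Finset.sum_add_distrib, ← Finset.mul_sum,
    Finset.sum_const, Finset.card_univ, nsmul_eq_mul]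
  push_cast
  ring

theorem diagLaplacian_diagQuad_mul_of_isHomogeneous (hε : ∀ i, ε i * ε i = 1)
    {P : MvPolynomial σ R} {d : ℕ} (hP : P.IsHomogeneous d) :
    diagLaplacian ε (diagQuad ε * P) =
      diagQuad ε * diagLaplacian ε P + (4 * d + 2 * Fintype.card σ) • P := by
  rw [diagLaplacian_diagQuad_mul hε, hP.sum_X_mul_pderiv, add_assoc, add_smul, nsmul_eq_mul,
    nsmul_eq_mul, nsmul_eq_mul]
  push_cast
  ring

theorem diagLaplacian_diagQuad_pow_succ_mul (hε : ∀ i, ε i * ε i = 1)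
    {h : MvPolynomial σ R} {m : ℕ} (hh : h.IsHomogeneous m) (hharm : diagLaplacian ε h = 0)
    (j : ℕ) :
    diagLaplacian ε (diagQuad ε ^ (j + 1) * h) =
      (2 * (j + 1) * (Fintype.card σ + 2 * m + 2 * j)) • (diagQuad ε ^ j * h) := by
  induction j with
  | zero =>
    rw [pow_one, diagLaplacian_diagQuad_mul_of_isHomogeneous hε hh, hharm]
    simp only [mul_zero, zero_add, pow_zero, one_mul]
    ring_nf
  | succ j ih =>
    have hdeg : (diagQuad ε ^ (j + 1) * h).IsHomogeneous (2 * (j + 1) + m) :=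
      ((isHomogeneous_diagQuad ε).pow (j + 1)).mul hh
    rw [pow_succ', mul_assoc, diagLaplacian_diagQuad_mul_of_isHomogeneous hε hdeg, ih,
      mul_smul_comm, ← mul_assoc, ← pow_succ', ← add_smul]
    ring_nf

end MvPolynomial

lemma sgn_mul_self (p : ℕ) {n : ℕ} (i : Fin n) : sgn p i * sgn p i = 1 := by
  unfold sgn; split <;> norm_num

lemma bCoef_succ_eq_natCast {n k j : ℕ} (hj : 2 * (j + 1) ≤ k) :
    bCoef n k (j + 1) = ((2 * (j + 1) * (n + 2 * (k - 2 * (j + 1)) + 2 * j) : ℕ) : ℝ) := by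
  rw [bCoef]
  push_cast [Nat.cast_sub hj]
  ring

theorem harmonic_eigenvector_general (p q : ℕ) (k s : ℕ) (hs : s ≤ k / 2)
    (h : MvPolynomial (Fin (p + q)) ℝ) (hdeg : h.IsHomogeneous (k - 2 * s))
    (hharm : lap p q h = 0) :
    Fquad p q * lap p q (Fquad p q ^ s * h) = C (bCoef (p + q) k s) * (Fquad p q ^ s * h) ∧
      (1 ≤ s → lap p q (Fquad p q ^ s * h) = C (bCoef (p + q) k s) * (Fquad p q ^ (s - 1) * h)) := by
  rcases s with _ | j
  · simp [bCoef, hharm]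
  have hlap : lap p q (Fquad p q ^ (j + 1) * h) =
      C (bCoef (p + q) k (j + 1)) * (Fquad p q ^ j * h) := by
    have hdiag := diagLaplacian_diagQuad_pow_succ_mul (sgn_mul_self p) hdeg hharm j
    rw [Fintype.card_fin] at hdiag
    rw [bCoef_succ_eq_natCast (by omega), map_natCast, ← nsmul_eq_mul]
    exact hdiag
  refine ⟨?_, fun _ => hlap⟩
  rw [hlap]
  ring

/-- If `h` is harmonic and homogeneous of degree `k - 2s` with `0 ≤ s ≤ ⌊k/2⌋`, then
`Fˢh` is an eigenvector of `R∘Δ` on degree-`k` polynomials with eigenvalue `b_{k,s}`,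
and for `s ≥ 1`, `Δ(Fˢh) = b_{k,s} F^{s-1} h`. -/
theorem harmonic_eigenvector (p q : ℕ) (hn : 1 ≤ p + q) (k s : ℕ) (hs : s ≤ k / 2)
    (h : MvPolynomial (Fin (p + q)) ℝ) (hdeg : h.IsHomogeneous (k - 2 * s))
    (hharm : lap p q h = 0) :
    Fquad p q * lap p q (Fquad p q ^ s * h) = C (bCoef (p + q) k s) * (Fquad p q ^ s * h) ∧
      (1 ≤ s → lap p q (Fquad p q ^ s * h) = C (bCoef (p + q) k s) * (Fquad p q ^ (s - 1) * h)) :=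
  harmonic_eigenvector_general p q k s hs h hdeg hharm
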